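/- Let η be an n×p real matrix of full column rank and Σ an n×n symmetric positive definite matrix. Then the Schur complement inequality holds: ηᵀΣ⁻¹η ⪰ (ηᵀη)(ηᵀΣη)⁻¹(ηᵀη) in the Loewner order, and consequently det(ηᵀΣ⁻¹η) ≥ det(ηᵀη)² / det(ηᵀΣη). -/

import Mathlib

open Matrix
open scoped Matrix

/-!
Put `C = ηᵀ Σ η` and `K = η - Σ η C⁻¹ (ηᵀ η)`. Expanding, `Kᵀ Σ⁻¹ K` is exactly the Schur
complement `ηᵀ Σ⁻¹ η - (ηᵀ η) C⁻¹ (ηᵀ η)`, which is therefore positive semidefinite.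
The determinant is monotone on positive definite matrices for the Loewner order: conjugating
`A ≤ B` by `A^{-1/2}` reduces it to `1 ≤ M`, and then every eigenvalue of `M` is at least `1`.
Finally the determinant of `(ηᵀ η) C⁻¹ (ηᵀ η)` is `det(ηᵀ η)² / det C`.
-/

open scoped ComplexOrder MatrixOrder

namespace Matrix

variable {m n 𝕜 : Type*} [Fintype n] [RCLike 𝕜]

lemma mulVec_injective_of_rank_eq_card {K : Type*} [Field K] {A : Matrix m n K}
    (h : A.rank = Fintype.card n) : Function.Injective A.mulVec := by
  have hker : Module.finrank K (LinearMap.ker A.mulVecLin) = 0 := by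
    have := LinearMap.finrank_range_add_finrank_ker A.mulVecLin
    rw [← rank, h, Module.finrank_fintype_fun_eq_card] at this
    omega
  exact LinearMap.ker_eq_bot.mp (Submodule.finrank_eq_zero.mp hker)

variable [DecidableEq n]

lemma PosDef.conjTranspose_mul_mul_inv_mul_le [Fintype m] [DecidableEq m] {S : Matrix m m 𝕜}
    (hS : S.PosDef) (X Y : Matrix m n 𝕜) : Xᴴ * Y * (Yᴴ * S * Y)⁻¹ * (Yᴴ * X) ≤ Xᴴ * S⁻¹ * X := by
  set C := Yᴴ * S * Y
  by_cases hC : IsUnit C.det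
  · have hSinvS : S⁻¹ * S = 1 := nonsing_inv_mul S ((isUnit_iff_isUnit_det S).mp hS.isUnit)
    have hSSinv : S * S⁻¹ = 1 := mul_nonsing_inv S ((isUnit_iff_isUnit_det S).mp hS.isUnit)
    have hCinvC : C⁻¹ * C = 1 := nonsing_inv_mul C hC
    have hCH : (C⁻¹)ᴴ = C⁻¹ := (isHermitian_conjTranspose_mul_mul Y hS.isHermitian).inv.eq
    set K := X - S * Y * C⁻¹ * (Yᴴ * X)
    have key : Kᴴ * S⁻¹ * K = Xᴴ * S⁻¹ * X - Xᴴ * Y * C⁻¹ * (Yᴴ * X) := by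
      have hKH : Kᴴ = Xᴴ - Xᴴ * Y * C⁻¹ * Yᴴ * S := by
        simp only [K, conjTranspose_sub, conjTranspose_mul, conjTranspose_conjTranspose, hCH,
          hS.isHermitian.eq, Matrix.mul_assoc]
      have cancel : ∀ Z : Matrix n n 𝕜, C⁻¹ * (Yᴴ * (S * (Y * Z))) = Z := fun Z => by
        rw [show Yᴴ * (S * (Y * Z)) = C * Z by simp only [C, Matrix.mul_assoc],
          ← Matrix.mul_assoc, hCinvC, Matrix.one_mul]
      rw [hKH]
      simp only [K, Matrix.sub_mul, Matrix.mul_sub, Matrix.mul_assoc, ← Matrix.mul_assoc S⁻¹ S,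
        hSinvS, hSSinv, Matrix.one_mul, cancel]
      abel
    rw [le_iff, ← key]
    exact hS.inv.posSemidef.conjTranspose_mul_mul_same K
  · -- `C⁻¹ = 0` by convention when `C` is singular
    rw [nonsing_inv_apply_not_isUnit C hC, Matrix.mul_zero, Matrix.zero_mul]
    exact (hS.inv.posSemidef.conjTranspose_mul_mul_same X).nonneg

lemma one_le_det_of_one_le {M : Matrix n n 𝕜} (hM : 1 ≤ M) : 1 ≤ M.det := by
  have hH : M.IsHermitian := by simpa using (le_iff.mp hM).isHermitian.add isHermitian_one
  have hspec := (CFC.one_le_iff (R := ℝ) M hH.isSelfAdjoint).mp hM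
  rw [hH.det_eq_prod_eigenvalues, ← RCLike.ofReal_prod, ← RCLike.ofReal_one,
    RCLike.ofReal_le_ofReal]
  exact Finset.one_le_prod fun i _ => hspec _ (hH.eigenvalues_mem_spectrum_real i)

lemma det_le_det_of_le {A B : Matrix n n 𝕜} (hA : A.PosDef) (hAB : A ≤ B) : A.det ≤ B.det := by
  set R := CFC.sqrt A
  have hRR : R * R = A := CFC.sqrt_mul_sqrt_self A hA.posSemidef.nonneg
  have hR : IsUnit R.det := (isUnit_iff_isUnit_det R).mp <|
    (CFC.isUnit_sqrt_iff A hA.posSemidef.nonneg).mpr hA.isUnit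
  have hRi : (R⁻¹)ᴴ = R⁻¹ := (nonneg_iff_posSemidef.mp (CFC.sqrt_nonneg A)).isHermitian.inv.eq
  have hone : 1 ≤ R⁻¹ * B * R⁻¹ := by
    have := star_left_conjugate_le_conjugate hAB R⁻¹
    rwa [star_eq_conjTranspose, hRi, ← hRR, Matrix.mul_assoc, Matrix.mul_assoc,
      mul_nonsing_inv R hR, Matrix.mul_one, nonsing_inv_mul R hR] at this
  calc A.det = A.det * 1 := (mul_one _).symm
    _ ≤ A.det * (R⁻¹ * B * R⁻¹).det :=
      mul_le_mul_of_nonneg_left (one_le_det_of_one_le hone) hA.det_pos.le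
    _ = (R * (R⁻¹ * B * R⁻¹) * R).det := by simp only [← hRR, det_mul]; ring
    _ = B.det := by
      rw [Matrix.mul_assoc, Matrix.mul_assoc, nonsing_inv_mul R hR, Matrix.mul_one,
        ← Matrix.mul_assoc, mul_nonsing_inv R hR, Matrix.one_mul]

end Matrix

/-- For η of full column rank and Σ symmetric positive definite,
ηᵀΣ⁻¹η ⪰ (ηᵀη)(ηᵀΣη)⁻¹(ηᵀη) in the Loewner order, and consequently
det(ηᵀΣ⁻¹η) ≥ det(ηᵀη)²/det(ηᵀΣη). -/
theorem stmt6 {n p : ℕ} (η : Matrix (Fin n) (Fin p) ℝ) (hrank : η.rank = p)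
    (S : Matrix (Fin n) (Fin n) ℝ) (hS : S.PosDef) :
    (ηᵀ * S⁻¹ * η - (ηᵀ * η) * (ηᵀ * S * η)⁻¹ * (ηᵀ * η)).PosSemidef ∧
    (ηᵀ * η).det ^ 2 / (ηᵀ * S * η).det ≤ (ηᵀ * S⁻¹ * η).det := by
  have hη : Function.Injective η.mulVec :=
    mulVec_injective_of_rank_eq_card (by rwa [Fintype.card_fin])
  have hG : (ηᵀ * η).PosDef := by
    simpa using PosDef.conjTranspose_mul_self η hη
  have hC : (ηᵀ * S * η).PosDef := by
    simpa using hS.conjTranspose_mul_mul_same hη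
  have hschur : (ηᵀ * η) * (ηᵀ * S * η)⁻¹ * (ηᵀ * η) ≤ ηᵀ * S⁻¹ * η := by
    simpa using hS.conjTranspose_mul_mul_inv_mul_le η η
  have hD : ((ηᵀ * η) * (ηᵀ * S * η)⁻¹ * (ηᵀ * η)).PosDef := by
    simpa [hG.isHermitian.eq] using
      hC.inv.conjTranspose_mul_mul_same (mulVec_injective_iff_isUnit.mpr hG.isUnit)
  refine ⟨hschur, ?_⟩
  calc (ηᵀ * η).det ^ 2 / (ηᵀ * S * η).det
      = ((ηᵀ * η) * (ηᵀ * S * η)⁻¹ * (ηᵀ * η)).det := by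
        rw [det_mul, det_mul, det_nonsing_inv, Ring.inverse_eq_inv]; ring
    _ ≤ (ηᵀ * S⁻¹ * η).det := det_le_det_of_le hD hschur
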